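/- arXiv:2209.09691 — 5 statements merged into one kernel-verified Lean document; each statement's English description precedes it below -/
import Mathlib

section
/- Let k, r, m, L be positive integers with r ≥ 4, 1 ≤ L < m ≤ r, n = k + r, and L a divisor of n. Suppose n_{α,β} (for α = 1,…,r−1 and β = 1,…,L) are nonnegative integers satisfying Σ_{α=1}^{r−1} n_{α,β} = (n/L)·(m − β) for every β and (n_{α₁,β} − n_{α₂,β})² ∈ {0,1} for all α₁, α₂, β. Define γ = [ Σ_{β=1}^{L} ( (n/L)·k·β + Σ_{α=1}^{r−1} n_{α,β}² ) + (m − L)·(k + r) ] / ((k + r)·m·k). Then γ_min ≤ γ ≤ γ_min + L(r−1)²/(4(k+r)mk), where γ_min = (L+1)/(2m) + (k+r)·(m² − m(L+1) + (L+1)(2L+1)/6) / (L·m·k·(r−1)) + (m−L)/(k·m). -/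
lemma sumIccId (L : ℕ) : ∑ β ∈ Finset.Icc 1 L, (β : ℚ) = L * (L + 1) / 2 := by
  induction L with
  | zero => simp
  | succ n ih =>
      rw [Finset.sum_Icc_succ_top (by omega), ih]
      push_cast; ring

lemma sumIccSq (L : ℕ) : ∑ β ∈ Finset.Icc 1 L, (β : ℚ) ^ 2 = L * (L + 1) * (2 * L + 1) / 6 := by
  induction L with
  | zero => simp
  | succ n ih =>
      rw [Finset.sum_Icc_succ_top (by omega), ih]
      push_cast; ring

lemma keyIdent (s : Finset ℕ) (f : ℕ → ℚ) :
    ∑ i ∈ s, ∑ j ∈ s, (f i - f j) ^ 2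
      = 2 * ((s.card : ℚ) * ∑ i ∈ s, f i ^ 2 - (∑ i ∈ s, f i) ^ 2) := by
  have h : ∀ i j, (f i - f j) ^ 2 = f i ^ 2 + f j ^ 2 - 2 * (f i * f j) := by
    intros; ring
  simp_rw [h, Finset.sum_sub_distrib, Finset.sum_add_distrib, Finset.sum_const,
    ← Finset.mul_sum, ← Finset.sum_mul, nsmul_eq_mul]
  rw [← Finset.mul_sum]
  ring

set_option maxHeartbeats 1600000 in
/-- Bounds on the average repair bandwidth ratio of all nodes of the
piggybacking code `C₁(n,k,m,L)`. -/
theorem stmt_8 (k r m L n : ℕ) (hk : 0 < k) (hr : 4 ≤ r) (hL : 1 ≤ L)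
    (hLm : L < m) (hmr : m ≤ r) (hn : n = k + r) (hdvd : L ∣ n)
    (N : ℕ → ℕ → ℕ)
    (hsum : ∀ β ∈ Finset.Icc 1 L,
      ∑ α ∈ Finset.Icc 1 (r - 1), N α β = (n / L) * (m - β))
    (hdiff : ∀ α₁ ∈ Finset.Icc 1 (r - 1), ∀ α₂ ∈ Finset.Icc 1 (r - 1),
      ∀ β ∈ Finset.Icc 1 L,
        ((N α₁ β : ℤ) - (N α₂ β : ℤ)) ^ 2 = 0 ∨ ((N α₁ β : ℤ) - (N α₂ β : ℤ)) ^ 2 = 1)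
    (γ γmin : ℚ)
    (hγ : γ = (∑ β ∈ Finset.Icc 1 L,
          (((n / L : ℕ) : ℚ) * (k : ℚ) * (β : ℚ)
            + ∑ α ∈ Finset.Icc 1 (r - 1), ((N α β : ℚ)) ^ 2)
        + ((m : ℚ) - (L : ℚ)) * ((k : ℚ) + (r : ℚ)))
        / (((k : ℚ) + (r : ℚ)) * (m : ℚ) * (k : ℚ)))
    (hmin : γmin = ((L : ℚ) + 1) / (2 * (m : ℚ))
        + ((k : ℚ) + (r : ℚ))
            * ((m : ℚ) ^ 2 - (m : ℚ) * ((L : ℚ) + 1)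
              + ((L : ℚ) + 1) * (2 * (L : ℚ) + 1) / 6)
            / ((L : ℚ) * (m : ℚ) * (k : ℚ) * ((r : ℚ) - 1))
        + ((m : ℚ) - (L : ℚ)) / ((k : ℚ) * (m : ℚ))) :
    γmin ≤ γ ∧
      γ ≤ γmin + (L : ℚ) * ((r : ℚ) - 1) ^ 2
          / (4 * ((k : ℚ) + (r : ℚ)) * (m : ℚ) * (k : ℚ)) := by
  set s : Finset ℕ := Finset.Icc 1 (r - 1) with hs
  set T : ℚ := (r : ℚ) - 1 with hTdef
  clear_value T
  have hr4 : (4 : ℚ) ≤ (r : ℚ) := by exact_mod_cast hr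
  have hT3 : (3 : ℚ) ≤ T := by rw [hTdef]; linarith
  have hT0 : (0 : ℚ) < T := by linarith
  have hk0 : (0 : ℚ) < (k : ℚ) := by exact_mod_cast hk
  have hm2 : 2 ≤ m := by omega
  have hm0 : (0 : ℚ) < (m : ℚ) := by exact_mod_cast (by omega : 0 < m)
  have hL0 : (0 : ℚ) < (L : ℚ) := by exact_mod_cast hL
  have hcard : (s.card : ℚ) = T := by
    rw [hs, Nat.card_Icc, hTdef]
    have : r - 1 + 1 - 1 = r - 1 := by omega
    rw [this, Nat.cast_sub (by omega : 1 ≤ r)]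
    norm_num
  set c : ℚ := ((n / L : ℕ) : ℚ) with hcdef
  have hcL : (L : ℚ) * c = (k : ℚ) + (r : ℚ) := by
    rw [hcdef]
    have h1 : L * (n / L) = n := Nat.mul_div_cancel' hdvd
    have : ((L * (n / L) : ℕ) : ℚ) = ((n : ℕ) : ℚ) := by rw [h1]
    push_cast at this
    rw [this, hn]; push_cast; ring
  have hc : c = ((k : ℚ) + (r : ℚ)) / (L : ℚ) := by
    rw [← hcL]; field_simp
  clear_value c
  set P : ℕ → ℚ := fun β => ∑ α ∈ s, ((N α β : ℚ)) ^ 2 with hP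
  set Sq : ℕ → ℚ := fun β => ∑ α ∈ s, ((N α β : ℚ)) with hSq
  clear_value P Sq
  -- value of Sq
  have hSval : ∀ β ∈ Finset.Icc 1 L, Sq β = c * ((m : ℚ) - (β : ℚ)) := by
    intro β hβ
    have hβm : β ≤ m := by
      have := (Finset.mem_Icc.mp hβ).2; omega
    have h := hsum β hβ
    have : ((∑ α ∈ s, N α β : ℕ) : ℚ) = (((n / L) * (m - β) : ℕ) : ℚ) := by rw [h]
    rw [Nat.cast_mul, Nat.cast_sum, Nat.cast_sub hβm] at this
    rw [hSq]; simpa [hcdef] using this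
  -- per-β bound
  have hB : ∀ β ∈ Finset.Icc 1 L,
      0 ≤ T * P β - Sq β ^ 2 ∧ T * P β - Sq β ^ 2 ≤ T ^ 2 / 2 := by
    intro β hβ
    have hkey := keyIdent s (fun α => (N α β : ℚ))
    rw [hcard] at hkey
    have hlow : (0 : ℚ) ≤ ∑ i ∈ s, ∑ j ∈ s, ((N i β : ℚ) - (N j β : ℚ)) ^ 2 :=
      Finset.sum_nonneg fun i _ => Finset.sum_nonneg fun j _ => sq_nonneg _
    have hup : ∑ i ∈ s, ∑ j ∈ s, ((N i β : ℚ) - (N j β : ℚ)) ^ 2 ≤ T ^ 2 := by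
      have h1 : ∀ i ∈ s, ∀ j ∈ s, ((N i β : ℚ) - (N j β : ℚ)) ^ 2 ≤ 1 := by
        intro i hi j hj
        have h := hdiff i hi j hj β hβ
        have h2 : ((N i β : ℤ) - (N j β : ℤ)) ^ 2 ≤ 1 := by rcases h with h | h <;> omega
        have h3 : ((((N i β : ℤ) - (N j β : ℤ)) ^ 2 : ℤ) : ℚ) ≤ ((1 : ℤ) : ℚ) := by
          exact_mod_cast h2
        push_cast at h3
        exact h3
      calc ∑ i ∈ s, ∑ j ∈ s, ((N i β : ℚ) - (N j β : ℚ)) ^ 2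
          ≤ ∑ i ∈ s, ∑ j ∈ s, (1 : ℚ) := by
            apply Finset.sum_le_sum
            intro i hi
            exact Finset.sum_le_sum fun j hj => h1 i hi j hj
        _ = (s.card : ℚ) * (s.card : ℚ) := by
            simp [Finset.sum_const, mul_comm]
        _ = T ^ 2 := by rw [hcard]; ring
    have hkey2 : ∑ i ∈ s, ∑ j ∈ s, ((N i β : ℚ) - (N j β : ℚ)) ^ 2
        = 2 * (T * P β - Sq β ^ 2) := by
      simp only [hP, hSq]; exact hkey
    rw [hkey2] at hlow hup
    constructor
    · linarith
    · linarith
  -- total bounds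
  have hXlow : 0 ≤ ∑ β ∈ Finset.Icc 1 L, (T * P β - Sq β ^ 2) :=
    Finset.sum_nonneg fun β hβ => (hB β hβ).1
  have hXup : ∑ β ∈ Finset.Icc 1 L, (T * P β - Sq β ^ 2) ≤ (L : ℚ) * (T ^ 2 / 2) := by
    calc ∑ β ∈ Finset.Icc 1 L, (T * P β - Sq β ^ 2)
        ≤ ∑ β ∈ Finset.Icc 1 L, (T ^ 2 / 2) :=
          Finset.sum_le_sum fun β hβ => (hB β hβ).2
      _ = (L : ℚ) * (T ^ 2 / 2) := by
          rw [Finset.sum_const, Nat.card_Icc]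
          simp [nsmul_eq_mul]
  have hsplit : ∑ β ∈ Finset.Icc 1 L, (T * P β - Sq β ^ 2)
      = T * (∑ β ∈ Finset.Icc 1 L, P β) - ∑ β ∈ Finset.Icc 1 L, Sq β ^ 2 := by
    rw [Finset.sum_sub_distrib, Finset.mul_sum]
  -- sum of squares of Sq
  have hSqsum : ∑ β ∈ Finset.Icc 1 L, Sq β ^ 2
      = c ^ 2 * ((L : ℚ) * (m : ℚ) ^ 2 - (m : ℚ) * (L : ℚ) * ((L : ℚ) + 1)
          + (L : ℚ) * ((L : ℚ) + 1) * (2 * (L : ℚ) + 1) / 6) := by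
    have h1 : ∑ β ∈ Finset.Icc 1 L, Sq β ^ 2
        = ∑ β ∈ Finset.Icc 1 L, (c ^ 2 * ((m : ℚ) ^ 2 - 2 * (m : ℚ) * (β : ℚ) + (β : ℚ) ^ 2)) := by
      apply Finset.sum_congr rfl
      intro β hβ
      rw [hSval β hβ]; ring
    rw [h1]
    rw [← Finset.mul_sum, Finset.sum_add_distrib, Finset.sum_sub_distrib,
      ← Finset.mul_sum, sumIccId, sumIccSq, Finset.sum_const, Nat.card_Icc]
    simp only [nsmul_eq_mul]
    have : ((L + 1 - 1 : ℕ) : ℚ) = (L : ℚ) := by norm_num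
    rw [this]
    ring
  set D : ℚ := ((k : ℚ) + (r : ℚ)) * (m : ℚ) * (k : ℚ) with hD
  have hD0 : (0 : ℚ) < D := by
    rw [hD]
    have : (0:ℚ) < (r:ℚ) := by linarith
    positivity
  clear_value D
  set A : ℚ := c * (k : ℚ) * ((L : ℚ) * ((L : ℚ) + 1) / 2)
      + ((m : ℚ) - (L : ℚ)) * ((k : ℚ) + (r : ℚ)) with hA
  clear_value A
  have hγ' : γ = (A + ∑ β ∈ Finset.Icc 1 L, P β) / D := by
    rw [hγ, hD, hA]
    congr 1
    rw [Finset.sum_add_distrib]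
    have : ∑ β ∈ Finset.Icc 1 L, c * (k : ℚ) * (β : ℚ)
        = c * (k : ℚ) * ((L : ℚ) * ((L : ℚ) + 1) / 2) := by
      rw [← Finset.mul_sum, sumIccId]
    rw [this]
    simp only [hP]
    ring
  have hmin' : γmin = (A + (∑ β ∈ Finset.Icc 1 L, Sq β ^ 2) / T) / D := by
    rw [hmin, hSqsum, hA, hD, hc, hTdef]
    have hTne : (r : ℚ) - 1 ≠ 0 := by intro h; linarith
    field_simp
    ring
  set X : ℚ := (∑ β ∈ Finset.Icc 1 L, P β) - (∑ β ∈ Finset.Icc 1 L, Sq β ^ 2) / T with hXdef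
  clear_value X
  have hγeq : γ = γmin + X / D := by
    rw [hγ', hmin', hXdef]
    field_simp
    ring
  rw [hsplit] at hXlow hXup
  have hXrepr : X = (T * (∑ β ∈ Finset.Icc 1 L, P β)
      - ∑ β ∈ Finset.Icc 1 L, Sq β ^ 2) / T := by
    rw [hXdef]
    field_simp
  have hX0 : 0 ≤ X := by
    rw [hXrepr]
    exact div_nonneg hXlow hT0.le
  have hXb : X ≤ (L : ℚ) * T ^ 2 / 4 := by
    rw [hXrepr, div_le_iff₀ hT0]
    nlinarith [mul_nonneg (mul_nonneg hL0.le (sq_nonneg T)) (by linarith : (0:ℚ) ≤ T - 2)]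
  constructor
  · rw [hγeq]
    have : 0 ≤ X / D := div_nonneg hX0 hD0.le
    linarith
  · rw [hγeq]
    have h4 : ((L : ℚ) * T ^ 2 / 4) / D
        = (L : ℚ) * T ^ 2 / (4 * ((k : ℚ) + (r : ℚ)) * (m : ℚ) * (k : ℚ)) := by
      rw [div_div, show (4:ℚ) * D = 4 * ((k : ℚ) + (r : ℚ)) * (m : ℚ) * (k : ℚ) from by
        rw [hD]; ring]
    have h5 : X / D ≤ ((L : ℚ) * T ^ 2 / 4) / D := (div_le_div_iff_of_pos_right hD0).mpr hXb
    rw [h4] at h5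
    linarith
end

section
/- Let m and r be real numbers with m ≥ 2 and r ≥ 4. The function γ : (0,∞) → ℝ defined by γ(L) = (L+1)/(2m) + (m²L − mL² − mL + L³/3 + L²/2 + L/6) / (L²·m·(r−1)) is strictly convex on (0,∞). -/
/-- The limiting average repair bandwidth ratio `γ` is strictly convex on `(0,∞)`. -/
theorem stmt_10 (m r : ℝ) (hm : 2 ≤ m) (hr : 4 ≤ r) :
    StrictConvexOn ℝ (Set.Ioi (0 : ℝ))
      (fun L : ℝ => (L + 1) / (2 * m)
        + (m ^ 2 * L - m * L ^ 2 - m * L + L ^ 3 / 3 + L ^ 2 / 2 + L / 6)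
          / (L ^ 2 * m * (r - 1))) := by
  have hm0 : (0 : ℝ) < m := by linarith
  have hr1 : (0 : ℝ) < r - 1 := by linarith
  set c : ℝ := (m ^ 2 - m + 1 / 6) / (m * (r - 1)) with hc
  set a : ℝ := 1 / (2 * m) + 1 / (3 * (m * (r - 1))) with ha
  set b : ℝ := 1 / (2 * m) + (1 / 2 - m) / (m * (r - 1)) with hb
  have hcpos : 0 < c := by
    apply div_pos
    · nlinarith
    · positivity
  have hinv : StrictConvexOn ℝ (Set.Ioi (0 : ℝ)) fun x : ℝ => x⁻¹ := by
    have h := strictConvexOn_zpow (m := -1) (by decide) (by decide)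
    simpa using h
  have hg : StrictConvexOn ℝ (Set.Ioi (0 : ℝ))
      (fun x : ℝ => c * x⁻¹ + (a * x + b)) := by
    have h1 : StrictConvexOn ℝ (Set.Ioi (0 : ℝ)) fun x : ℝ => c * x⁻¹ := by
      refine ⟨convex_Ioi 0, fun x hx y hy hxy p q hp hq hpq => ?_⟩
      have h := hinv.2 hx hy hxy hp hq hpq
      simp only [smul_eq_mul] at h ⊢
      nlinarith [h, hcpos]
    have h2 : ConvexOn ℝ (Set.Ioi (0 : ℝ)) fun x : ℝ => a * x + b := by
      have ha0 : 0 ≤ a := by positivity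
      have := ((convexOn_id (convex_Ioi (0 : ℝ))).smul ha0).add_const b
      exact this
    exact h1.add_convexOn h2
  have heq : ∀ L ∈ Set.Ioi (0 : ℝ),
      (L + 1) / (2 * m)
        + (m ^ 2 * L - m * L ^ 2 - m * L + L ^ 3 / 3 + L ^ 2 / 2 + L / 6)
          / (L ^ 2 * m * (r - 1)) = c * L⁻¹ + (a * L + b) := by
    intro L hL
    have hL0 : L ≠ 0 := ne_of_gt hL
    rw [hc, ha, hb]; field_simp
    ring
  refine ⟨convex_Ioi 0, fun x hx y hy hxy p q hp hq hpq => ?_⟩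
  have hmem : p • x + q • y ∈ Set.Ioi (0 : ℝ) :=
    (convex_Ioi (0 : ℝ)) hx hy hp.le hq.le hpq
  have key := hg.2 hx hy hxy hp hq hpq
  simp only [smul_eq_mul] at key hmem ⊢
  rw [heq x hx, heq y hy, heq _ hmem]
  exact key
end

section
/- Let m and r be real numbers with m ≥ 2 and r ≥ 4, and define γ : (0,∞) → ℝ by γ(L) = (L+1)/(2m) + (m²L − mL² − mL + L³/3 + L²/2 + L/6) / (L²·m·(r−1)). Let L₀ = √((6m² − 6m + 1)/(3r − 1)). Then L₀ > 0, γ'(L₀) = 0, and γ attains its global minimum on (0,∞) at L₀; that is, γ(L₀) ≤ γ(L) for every L > 0. -/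
/-- `γ` attains its global minimum on `(0,∞)` at `L₀ = √((6m²−6m+1)/(3r−1))`,
where moreover `γ'(L₀) = 0`. -/
theorem stmt_11 (m r : ℝ) (hm : 2 ≤ m) (hr : 4 ≤ r)
    (γ : ℝ → ℝ)
    (hγ : γ = fun L : ℝ => (L + 1) / (2 * m)
      + (m ^ 2 * L - m * L ^ 2 - m * L + L ^ 3 / 3 + L ^ 2 / 2 + L / 6)
        / (L ^ 2 * m * (r - 1)))
    (L₀ : ℝ) (hL₀ : L₀ = Real.sqrt ((6 * m ^ 2 - 6 * m + 1) / (3 * r - 1))) :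
    0 < L₀ ∧ deriv γ L₀ = 0 ∧ ∀ L : ℝ, 0 < L → γ L₀ ≤ γ L := by
  have hm0 : (0:ℝ) < m := by linarith
  have hr1 : (0:ℝ) < r - 1 := by linarith
  have hs : (0:ℝ) < 3 * r - 1 := by linarith
  have hK : (0:ℝ) < 6 * m ^ 2 - 6 * m + 1 := by nlinarith
  have hL0pos : 0 < L₀ := by
    rw [hL₀]; exact Real.sqrt_pos.mpr (div_pos hK hs)
  have hL0ne : L₀ ≠ 0 := ne_of_gt hL0pos
  have hL0sq : L₀ ^ 2 = (6 * m ^ 2 - 6 * m + 1) / (3 * r - 1) := by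
    rw [hL₀, Real.sq_sqrt (le_of_lt (div_pos hK hs))]
  set a : ℝ := (3 * r - 1) / (6 * m * (r - 1)) with ha
  set b : ℝ := (6 * m ^ 2 - 6 * m + 1) / (6 * m * (r - 1)) with hb
  set c : ℝ := 1 / (2 * m) + (1 / 2 - m) / (m * (r - 1)) with hc
  have hapos : 0 < a := div_pos hs (by positivity)
  have hab : b = a * L₀ ^ 2 := by
    rw [ha, hb, hL0sq, div_mul_div_comm, mul_comm (3 * r - 1), mul_div_mul_right _ _ hs.ne']
  have hId : ∀ L : ℝ, L ≠ 0 → γ L = a * L + b * L⁻¹ + c := by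
    intro L hL
    rw [hγ, ha, hb, hc]
    field_simp
    ring
  refine ⟨hL0pos, ?_, ?_⟩
  · have hev : γ =ᶠ[nhds L₀] fun L => a * L + b * L⁻¹ + c := by
      filter_upwards [eventually_ne_nhds hL0ne] with x hx
      exact hId x hx
    rw [Filter.EventuallyEq.deriv_eq hev]
    have hd : HasDerivAt (fun L : ℝ => a * L + b * L⁻¹ + c)
        (a + b * (-(L₀ ^ 2)⁻¹)) L₀ := by
      have h1 : HasDerivAt (fun L : ℝ => a * L) a L₀ := by
        simpa using (hasDerivAt_id L₀).const_mul a
      have h2 : HasDerivAt (fun L : ℝ => b * L⁻¹) (b * (-(L₀ ^ 2)⁻¹)) L₀ := by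
        simpa using (hasDerivAt_inv hL0ne).const_mul b
      exact (h1.add h2).add_const c
    rw [hd.deriv, hab]
    field_simp
    ring
  · intro L hL
    have hLne : L ≠ 0 := ne_of_gt hL
    have key : γ L - γ L₀ = a * (L - L₀) ^ 2 / L := by
      rw [hId L hLne, hId L₀ hL0ne, hab]
      field_simp
      ring
    nlinarith [sq_nonneg (L - L₀), mul_pos hapos hL,
      div_nonneg (mul_nonneg hapos.le (sq_nonneg (L - L₀))) hL.le]
end

section
/- Let m and r be real numbers with m ≥ 2 and r ≥ 4, define γ : (0,∞) → ℝ by γ(L) = (L+1)/(2m) + (m²L − mL² − mL + L³/3 + L²/2 + L/6) / (L²·m·(r−1)), and let L₀ = √((6m² − 6m + 1)/(3r − 1)). Then γ'(L) < 0 for every L with 0 < L < L₀, and γ'(L) > 0 for every L > L₀; in particular, γ is strictly decreasing on (0, L₀] and strictly increasing on [L₀, ∞). -/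
/-- `γ'(L) < 0` for `0 < L < L₀` and `γ'(L) > 0` for `L > L₀`; hence `γ` is
strictly decreasing on `(0, L₀]` and strictly increasing on `[L₀, ∞)`. -/
theorem stmt_12 (m r : ℝ) (hm : 2 ≤ m) (hr : 4 ≤ r)
    (γ : ℝ → ℝ)
    (hγ : γ = fun L : ℝ => (L + 1) / (2 * m)
      + (m ^ 2 * L - m * L ^ 2 - m * L + L ^ 3 / 3 + L ^ 2 / 2 + L / 6)
        / (L ^ 2 * m * (r - 1)))
    (L₀ : ℝ) (hL₀ : L₀ = Real.sqrt ((6 * m ^ 2 - 6 * m + 1) / (3 * r - 1))) :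
    (∀ L : ℝ, 0 < L → L < L₀ → deriv γ L < 0) ∧
    (∀ L : ℝ, L₀ < L → 0 < deriv γ L) ∧
    StrictAntiOn γ (Set.Ioc 0 L₀) ∧
    StrictMonoOn γ (Set.Ici L₀) := by
  have hm0 : (0:ℝ) < m := by linarith
  have hr1 : (0:ℝ) < r - 1 := by linarith
  have h3r : (0:ℝ) < 3 * r - 1 := by linarith
  have hnum : (0:ℝ) < 6 * m ^ 2 - 6 * m + 1 := by nlinarith
  have harg : (0:ℝ) < (6 * m ^ 2 - 6 * m + 1) / (3 * r - 1) := div_pos hnum h3r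
  have hL₀pos : 0 < L₀ := by rw [hL₀]; exact Real.sqrt_pos.mpr harg
  have hL₀sq : L₀ ^ 2 = (6 * m ^ 2 - 6 * m + 1) / (3 * r - 1) := by
    rw [hL₀, Real.sq_sqrt harg.le]
  have key : ∀ L : ℝ, L ≠ 0 → HasDerivAt γ
      (((3 * r - 1) * L ^ 2 - (6 * m ^ 2 - 6 * m + 1)) / (6 * L ^ 2 * m * (r - 1))) L := by
    intro L hL
    rw [hγ]
    have hid : HasDerivAt (fun x : ℝ => x) 1 L := hasDerivAt_id L
    have h2 : HasDerivAt (fun x : ℝ => x ^ 2) (2 * L) L := by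
      simpa using hasDerivAt_pow 2 L
    have h3 : HasDerivAt (fun x : ℝ => x ^ 3) (3 * L ^ 2) L := by
      simpa using hasDerivAt_pow 3 L
    have h1 : HasDerivAt (fun x : ℝ => (x + 1) / (2 * m)) (1 / (2 * m)) L := by
      simpa using ((hasDerivAt_id L).add_const 1).div_const (2 * m)
    have hN : HasDerivAt
        (fun x : ℝ => m ^ 2 * x - m * x ^ 2 - m * x + x ^ 3 / 3 + x ^ 2 / 2 + x / 6)
        (m ^ 2 - 2 * m * L - m + L ^ 2 + L + 1 / 6) L := by
      have := (((((hid.const_mul (m ^ 2)).sub (h2.const_mul m)).sub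
        (hid.const_mul m)).add (h3.div_const 3)).add (h2.div_const 2)).add
        (hid.div_const 6)
      exact this.congr_deriv (by ring)
    have hD : HasDerivAt (fun x : ℝ => x ^ 2 * m * (r - 1)) (2 * L * m * (r - 1)) L := by
      exact (h2.mul_const m).mul_const (r - 1)
    have hDne : L ^ 2 * m * (r - 1) ≠ 0 := by positivity
    have := h1.add (hN.div hD hDne)
    exact this.congr_deriv (by field_simp; ring)
  have hderiv : ∀ L : ℝ, L ≠ 0 → deriv γ L =
      ((3 * r - 1) * L ^ 2 - (6 * m ^ 2 - 6 * m + 1)) / (6 * L ^ 2 * m * (r - 1)) :=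
    fun L hL => (key L hL).deriv
  have hneg : ∀ L : ℝ, 0 < L → L < L₀ → deriv γ L < 0 := by
    intro L hLpos hLlt
    rw [hderiv L hLpos.ne']
    apply div_neg_of_neg_of_pos
    · have hsq : L ^ 2 < L₀ ^ 2 := by nlinarith
      rw [hL₀sq] at hsq
      have := (lt_div_iff₀ h3r).mp hsq
      nlinarith
    · positivity
  have hpos : ∀ L : ℝ, L₀ < L → 0 < deriv γ L := by
    intro L hLgt
    have hLpos : 0 < L := hL₀pos.trans hLgt
    rw [hderiv L hLpos.ne']
    apply div_pos
    · have hsq : L₀ ^ 2 < L ^ 2 := by nlinarith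
      rw [hL₀sq] at hsq
      have := (div_lt_iff₀ h3r).mp hsq
      nlinarith
    · positivity
  refine ⟨hneg, hpos, ?_, ?_⟩
  · apply strictAntiOn_of_deriv_neg (convex_Ioc 0 L₀)
    · intro x hx
      exact (key x (ne_of_gt hx.1)).continuousAt.continuousWithinAt
    · intro x hx
      rw [interior_Ioc] at hx
      exact hneg x hx.1 hx.2
  · apply strictMonoOn_of_deriv_pos (convex_Ici L₀)
    · intro x hx
      have : 0 < x := lt_of_lt_of_le hL₀pos hx
      exact (key x this.ne').continuousAt.continuousWithinAt
    · intro x hx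
      rw [interior_Ici] at hx
      exact hpos x hx
end

section
/- Let s and r be real numbers with s ≥ 2 and r ≥ 4, and define φ : (0,∞) → ℝ by φ(L) = (L+1)/(2s) + (s² − s(L+1) + (L+1)(2L+1)/6) / (L·s·(r−1)). Let L₀ = √((6s² − 6s + 1)/(3r − 1)). Then L₀ > 0 and φ attains its global minimum on (0,∞) at L₀; that is, φ(L₀) ≤ φ(L) for every L > 0. -/
/-- The limiting average repair bandwidth ratio of data nodes of `C₂`,
`φ(L) = (L+1)/(2s) + (s² − s(L+1) + (L+1)(2L+1)/6)/(Ls(r−1))`, attains its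
global minimum on `(0,∞)` at `L₀ = √((6s²−6s+1)/(3r−1))`. -/
theorem stmt_13 (s r : ℝ) (hs : 2 ≤ s) (hr : 4 ≤ r)
    (φ : ℝ → ℝ)
    (hφ : φ = fun L : ℝ => (L + 1) / (2 * s)
      + (s ^ 2 - s * (L + 1) + (L + 1) * (2 * L + 1) / 6) / (L * s * (r - 1)))
    (L₀ : ℝ) (hL₀ : L₀ = Real.sqrt ((6 * s ^ 2 - 6 * s + 1) / (3 * r - 1))) :
    0 < L₀ ∧ ∀ L : ℝ, 0 < L → φ L₀ ≤ φ L := by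
  have hs0 : (0:ℝ) < s := by linarith
  have hr1 : (0:ℝ) < r - 1 := by linarith
  have h3r : (0:ℝ) < 3 * r - 1 := by linarith
  have hnum : (0:ℝ) < 6 * s ^ 2 - 6 * s + 1 := by nlinarith
  have hdivpos : (0:ℝ) < (6 * s ^ 2 - 6 * s + 1) / (3 * r - 1) := div_pos hnum h3r
  have hL₀pos : 0 < L₀ := by rw [hL₀]; exact Real.sqrt_pos.mpr hdivpos
  have hL₀sq : L₀ ^ 2 = (6 * s ^ 2 - 6 * s + 1) / (3 * r - 1) := by
    rw [hL₀, Real.sq_sqrt hdivpos.le]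
  have hkey : L₀ ^ 2 * (3 * r - 1) = 6 * s ^ 2 - 6 * s + 1 := by
    rw [hL₀sq]; field_simp
  refine ⟨hL₀pos, fun L hL => ?_⟩
  have hident : φ L - φ L₀ = (3 * r - 1) * (L - L₀) ^ 2 / (6 * s * (r - 1) * L) := by
    subst hφ
    simp only
    field_simp
    linear_combination (2 * (L - L₀)) * hkey
  have hnn : 0 ≤ φ L - φ L₀ := by
    rw [hident]
    positivity
  linarith
end
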